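/- arXiv:1309.4305 — 2 statements merged into one kernel-verified Lean document; each statement's English description precedes it below -/
import Mathlib

section
/- If a nonnegative real sequence (e_k) satisfies e_0 = 0 and e_{k+1} ≤ C·τ^{3}/(kτ)^{α} + e_k for all k ≥ 1 with 0 ≤ α < 1, and n·τ ≤ T, then e_n ≤ C'·τ² for a constant C' depending only on C, T, α (uniformly in τ and n). -/
/-!
Unrolling the recursion gives `e (m + 1) ≤ C τ^(3-α) ∑_{k<m} (k+1)^(-α)`. Summing the tangent
bounds `(1-α) (k+1)^(-α) ≤ (k+1)^(1-α) - k^(1-α)` of the concave `x ↦ x^(1-α)` telescopes to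
`∑_{k<m} (k+1)^(-α) ≤ m^(1-α)/(1-α)`, so `e (m + 1) ≤ C/(1-α) · (mτ)^(1-α) · τ² ≤ C/(1-α) · T^(1-α) · τ²`.
-/

open Real Finset

lemma mul_rpow_sub_one_mul_sub_le_rpow_sub_rpow {p x y : ℝ} (hp0 : 0 ≤ p) (hp1 : p ≤ 1)
    (hx : 0 ≤ x) (hy : 0 < y) : p * y ^ (p - 1) * (y - x) ≤ y ^ p - x ^ p := by
  have bernoulli : (x / y) ^ p ≤ 1 + p * (x / y - 1) := by
    simpa using rpow_one_add_le_one_add_mul_self (s := x / y - 1)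
      (by linarith [div_nonneg hx hy.le]) hp0 hp1
  have hyp : 0 < y ^ p := rpow_pos_of_pos hy p
  have hpow : y ^ (p - 1) = y ^ p / y := rpow_sub_one hy.ne' p
  rw [div_rpow hx hy.le, div_le_iff₀ hyp] at bernoulli
  rw [hpow]
  have : (1 + p * (x / y - 1)) * y ^ p = y ^ p - p * (y ^ p / y) * (y - x) := by
    field_simp
    ring
  linarith

lemma one_sub_mul_sum_rpow_neg_le {α : ℝ} (hα0 : 0 ≤ α) (hα1 : α ≤ 1) (n : ℕ) :
    (1 - α) * ∑ k ∈ range n, ((k : ℝ) + 1) ^ (-α) ≤ (n : ℝ) ^ (1 - α) := by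
  induction n with
  | zero => simpa using rpow_nonneg le_rfl (1 - α)
  | succ n ih =>
    have step := mul_rpow_sub_one_mul_sub_le_rpow_sub_rpow (p := 1 - α) (by linarith) (by linarith)
      n.cast_nonneg (by positivity : (0 : ℝ) < n + 1)
    rw [show 1 - α - 1 = -α by ring] at step
    rw [sum_range_succ, mul_add]
    push_cast
    linarith

lemma le_add_sum_of_succ_le_add {M : Type*} [AddCommMonoid M] [PartialOrder M]
    [IsOrderedAddMonoid M] {e a : ℕ → M} (h : ∀ k, e (k + 1) ≤ a k + e k) (n : ℕ) :
    e n ≤ e 0 + ∑ k ∈ range n, a k := by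
  induction n with
  | zero => simp
  | succ n ih =>
    calc e (n + 1) ≤ a n + e n := h n
      _ ≤ a n + (e 0 + ∑ k ∈ range n, a k) := by gcongr
      _ = e 0 + ∑ k ∈ range (n + 1), a k := by rw [sum_range_succ]; abel

lemma parabolic_local_error_eq {C τ α : ℝ} (hτ : 0 < τ) (k : ℕ) :
    C * τ ^ 3 / (((k + 1 : ℕ) : ℝ) * τ) ^ α = C * τ ^ (3 - α) * ((k : ℝ) + 1) ^ (-α) := by
  have hk : (0 : ℝ) < k + 1 := by positivity
  push_cast
  rw [mul_rpow hk.le hτ.le, rpow_neg hk.le, rpow_sub hτ, rpow_ofNat]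
  field_simp

lemma parabolic_error_le {C τ α : ℝ} (hC : 0 ≤ C) (hτ : 0 < τ) (hα0 : 0 ≤ α) (hα1 : α < 1)
    {e : ℕ → ℝ} (h1 : e 1 = 0)
    (hrec : ∀ k ≥ 1, e (k + 1) ≤ C * τ ^ 3 / ((k : ℝ) * τ) ^ α + e k) (m : ℕ) :
    e (m + 1) ≤ C / (1 - α) * ((m : ℝ) * τ) ^ (1 - α) * τ ^ 2 := by
  have h1α : 0 < 1 - α := by linarith
  have unrolled := le_add_sum_of_succ_le_add (e := fun k ↦ e (k + 1))
    (fun k ↦ hrec (k + 1) (by omega)) m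
  simp only [h1, zero_add, parabolic_local_error_eq hτ, ← mul_sum] at unrolled
  have hsum := one_sub_mul_sum_rpow_neg_le hα0 hα1.le m
  have hscale : τ ^ (3 - α) * (m : ℝ) ^ (1 - α) = ((m : ℝ) * τ) ^ (1 - α) * τ ^ 2 := by
    rw [mul_rpow m.cast_nonneg hτ.le, show 3 - α = (1 - α) + 2 by ring,
      rpow_add hτ, rpow_two]
    ring
  calc e (m + 1) ≤ C * τ ^ (3 - α) * ∑ k ∈ range m, ((k : ℝ) + 1) ^ (-α) := unrolled
    _ ≤ C * τ ^ (3 - α) * ((m : ℝ) ^ (1 - α) / (1 - α)) := by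
      gcongr
      rw [le_div_iff₀ h1α]
      linarith
    _ = C / (1 - α) * ((m : ℝ) * τ) ^ (1 - α) * τ ^ 2 := by
      linear_combination C / (1 - α) * hscale

/-- Parabolic convergence recursion with smoothing exponent `0 ≤ α < 1`:
if `e 0 = 0` (and `e 1 = 0`) and `e (k+1) ≤ C·τ³/(kτ)^α + e k` for all `k ≥ 1`, and
`n·τ ≤ T`, then `e n ≤ C'·τ²` for a constant `C'` depending only on `C`, `T`, `α`
(uniformly in `τ` and `n`). -/
theorem parabolic_recursion_alpha_lt_one
    (C T α : ℝ) (hC : 0 < C) (hT : 0 < T) (hα0 : 0 ≤ α) (hα1 : α < 1) :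
    ∃ C' > 0, ∀ (τ : ℝ) (n : ℕ) (e : ℕ → ℝ), 0 < τ →
      (∀ k, 0 ≤ e k) → e 0 = 0 → e 1 = 0 →
      (∀ k ≥ 1, e (k + 1) ≤ C * τ ^ 3 / ((k : ℝ) * τ) ^ α + e k) →
      (n : ℝ) * τ ≤ T → e n ≤ C' * τ ^ 2 := by
  have h1α : 0 < 1 - α := by linarith
  refine ⟨C / (1 - α) * T ^ (1 - α), by positivity, ?_⟩
  intro τ n e hτ _ h0 h1 hrec hnT
  cases n with
  | zero => rw [h0]; positivity
  | succ m =>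
    have hmT : (m : ℝ) * τ ≤ T := by push_cast at hnT; nlinarith
    calc e (m + 1) ≤ C / (1 - α) * ((m : ℝ) * τ) ^ (1 - α) * τ ^ 2 :=
          parabolic_error_le hC.le hτ hα0 hα1 h1 hrec m
      _ ≤ C / (1 - α) * T ^ (1 - α) * τ ^ 2 := by gcongr
end

section
/- Let u(t,x) = u₀(x - v(t)) with v(t) = ∫₀^t u(σ,0)dσ, where u₀ ∈ C¹ and |u(σ,0)| ≥ m > 0 for all σ ∈ [0,t]. Then for the points z = x - v(t), w = x - v(s) one has |z - w| ≥ m·|t - s|, and consequently |∂_x u(t,x) - ∂_x u(s,x)|/|t-s|^β ≥ m^β·|u₀'(z) - u₀'(w)|/|z-w|^β for s ≠ t. -/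
/-- For `u(t,x) = u₀(x - v(t))` with `v(t) = ∫₀^t u(σ,0)dσ`
(here `g σ = u(σ,0)` with `g` continuous and `|g| ≥ m > 0` on `[0,t]`), the points
`z = x - v(t)`, `w = x - v(s)` satisfy `|z - w| ≥ m·|t-s|`, and for `s ≠ t`
`|∂ₓu(t,x) - ∂ₓu(s,x)|/|t-s|^β ≥ m^β·|u₀'(z) - u₀'(w)|/|z-w|^β`
(note `∂ₓu(t,x) = u₀'(x - v(t))`). -/
theorem toy_model_time_regularity_bound
    (u₀ g v : ℝ → ℝ) (m t s x β : ℝ)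
    (hu₀ : Differentiable ℝ u₀) (hg : Continuous g) (hm : 0 < m)
    (hs : s ∈ Set.Icc 0 t)
    (hbound : ∀ σ ∈ Set.Icc 0 t, m ≤ |g σ|)
    (hβ : 0 ≤ β)
    (hv : ∀ r : ℝ, v r = ∫ σ in (0 : ℝ)..r, g σ) :
    m * |t - s| ≤ |(x - v t) - (x - v s)| ∧
    (s ≠ t →
      m ^ β * |deriv u₀ (x - v t) - deriv u₀ (x - v s)| / |(x - v t) - (x - v s)| ^ β ≤
        |deriv u₀ (x - v t) - deriv u₀ (x - v s)| / |t - s| ^ β) := by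
  obtain ⟨hs0, hst⟩ := hs
  have ht0 : (0:ℝ) ≤ t := le_trans hs0 hst
  -- the integral of g over [s,t]
  have hvdiff : v t - v s = ∫ σ in s..t, g σ := by
    rw [hv, hv, ← intervalIntegral.integral_interval_sub_left
      (hg.intervalIntegrable 0 t) (hg.intervalIntegrable 0 s)]
  -- g has constant sign on [0,t]
  have hnz : ∀ σ ∈ Set.Icc (0:ℝ) t, g σ ≠ 0 := by
    intro σ hσ h0
    have := hbound σ hσ
    rw [h0, abs_zero] at this
    linarith
  have hsign : (∀ σ ∈ Set.Icc (0:ℝ) t, m ≤ g σ) ∨ (∀ σ ∈ Set.Icc (0:ℝ) t, g σ ≤ -m) := by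
    have h0mem : (0:ℝ) ∈ Set.Icc (0:ℝ) t := ⟨le_refl 0, ht0⟩
    rcases lt_or_gt_of_ne (hnz 0 h0mem) with hneg | hpos
    · right
      intro σ hσ
      by_contra h
      push_neg at h
      have hσpos : 0 < g σ := by
        have := hbound σ hσ
        rcases abs_cases (g σ) with ⟨he, _⟩ | ⟨he, _⟩ <;> linarith
      have : (0:ℝ) ∈ Set.Icc (g 0) (g σ) := ⟨le_of_lt hneg, le_of_lt hσpos⟩
      obtain ⟨c, hc, hgc⟩ := intermediate_value_Icc hσ.1 (hg.continuousOn) this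
      exact hnz c ⟨hc.1, le_trans hc.2 hσ.2⟩ hgc
    · left
      intro σ hσ
      by_contra h
      push_neg at h
      have hσneg : g σ < 0 := by
        have := hbound σ hσ
        rcases abs_cases (g σ) with ⟨he, _⟩ | ⟨he, _⟩ <;> linarith
      have : (0:ℝ) ∈ Set.Icc (g σ) (g 0) := ⟨le_of_lt hσneg, le_of_lt hpos⟩
      obtain ⟨c, hc, hgc⟩ := intermediate_value_Icc' hσ.1 (hg.continuousOn) this
      exact hnz c ⟨hc.1, le_trans hc.2 hσ.2⟩ hgc
  -- main bound
  have key : m * |t - s| ≤ |(x - v t) - (x - v s)| := by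
    have habs : |(x - v t) - (x - v s)| = |v t - v s| := by
      rw [show (x - v t) - (x - v s) = -(v t - v s) by ring, abs_neg]
    rw [habs, hvdiff, abs_of_nonneg (by linarith : (0:ℝ) ≤ t - s)]
    have hIcc : Set.Icc s t ⊆ Set.Icc 0 t := Set.Icc_subset_Icc hs0 le_rfl
    rcases hsign with hpos | hneg
    · have h1 : (∫ σ in s..t, m) ≤ ∫ σ in s..t, g σ := by
        apply intervalIntegral.integral_mono_on hst
          (intervalIntegrable_const) (hg.intervalIntegrable s t)
        intro σ hσ; exact hpos σ (hIcc hσ)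
      rw [intervalIntegral.integral_const, smul_eq_mul] at h1
      have hnn : (0:ℝ) ≤ ∫ σ in s..t, g σ := le_trans (by nlinarith) h1
      rw [abs_of_nonneg hnn]; nlinarith
    · have h1 : (∫ σ in s..t, g σ) ≤ ∫ σ in s..t, (-m) := by
        apply intervalIntegral.integral_mono_on hst
          (hg.intervalIntegrable s t) (intervalIntegrable_const)
        intro σ hσ; exact hneg σ (hIcc hσ)
      rw [intervalIntegral.integral_const, smul_eq_mul] at h1
      have hnp : (∫ σ in s..t, g σ) ≤ 0 := le_trans h1 (by nlinarith)
      rw [abs_of_nonpos hnp]; nlinarith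
  refine ⟨key, fun hne => ?_⟩
  have hts : 0 < |t - s| := abs_pos.mpr (sub_ne_zero.mpr (Ne.symm hne))
  have hDpos : 0 < |(x - v t) - (x - v s)| := lt_of_lt_of_le (by positivity) key
  set A := |deriv u₀ (x - v t) - deriv u₀ (x - v s)| with hA
  set D := |(x - v t) - (x - v s)| with hD
  have hA0 : 0 ≤ A := abs_nonneg _
  have hpow : m ^ β * |t - s| ^ β ≤ D ^ β := by
    rw [← Real.mul_rpow (le_of_lt hm) (abs_nonneg _)]
    exact Real.rpow_le_rpow (by positivity) key hβ
  rw [div_le_div_iff₀ (Real.rpow_pos_of_pos hDpos β) (Real.rpow_pos_of_pos hts β)]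
  calc m ^ β * A * |t - s| ^ β = A * (m ^ β * |t - s| ^ β) := by ring
    _ ≤ A * D ^ β := mul_le_mul_of_nonneg_left hpow hA0
end
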